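/- For all g ≥ 0 and q ≥ 1, the independence number of G_q(g) equals ((q+1)(q+2)/2)^g. -/

import Mathlib

/-- Edge corona product `G ⊛ K_q`: keep `G`, and for each edge of `G` add a fresh
copy of the complete graph on `q` vertices, joining all its vertices to both
endpoints of the edge. -/
def edgeCorona {V : Type} (G : SimpleGraph V) (q : ℕ) :
    SimpleGraph (V ⊕ (G.edgeSet × Fin q)) where
  Adj := fun x y => match x, y with
    | Sum.inl u, Sum.inl v => G.Adj u v
    | Sum.inl u, Sum.inr p => u ∈ (p.1 : Sym2 V)
    | Sum.inr p, Sum.inl v => v ∈ (p.1 : Sym2 V)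
    | Sum.inr p, Sum.inr r => p.1 = r.1 ∧ p.2 ≠ r.2
  symm := ⟨by
    rintro (u | p) (v | r) h
    · exact G.adj_symm h
    · exact h
    · exact h
    · exact ⟨h.1.symm, h.2.symm⟩⟩
  loopless := ⟨by
    rintro (u | p) h
    · exact G.loopless.irrefl u h
    · exact h.2 rfl⟩

/-- The simplicial network `G_q(g)` together with its vertex type:
`G_q(0) = K_{q+2}` and `G_q(g+1) = G_q(g) ⊛ K_q`. -/
def Gaux (q : ℕ) : ℕ → Σ V : Type, SimpleGraph V
  | 0 => ⟨Fin (q + 2), ⊤⟩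
  | g + 1 => ⟨_, edgeCorona (Gaux q g).2 q⟩

abbrev GVert (q g : ℕ) : Type := (Gaux q g).1

abbrev Gnet (q g : ℕ) : SimpleGraph (GVert q g) := (Gaux q g).2

/-- The `q+2` hub nodes of `G_q(g)`: the vertices present from iteration `0`. -/
def hub (q : ℕ) : (g : ℕ) → Fin (q + 2) → GVert q g
  | 0 => id
  | g + 1 => fun k => Sum.inl (hub q g k)

/-- A set of vertices is independent if its elements are pairwise non-adjacent. -/
def IsIndependentSet {V : Type} (G : SimpleGraph V) (s : Finset V) : Prop :=
  (s : Set V).Pairwise fun u v => ¬ G.Adj u v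

/-- The independence number: the largest cardinality of an independent set. -/
noncomputable def indepNum {V : Type} (G : SimpleGraph V) : ℕ :=
  sSup {n | ∃ s : Finset V, IsIndependentSet G s ∧ s.card = n}

/-!
Give every vertex `u` of a graph `G` without isolated vertices an edge `e(u)` containing it. In the
edge corona `G ⊛ K_q`, the fibres of the map sending an old vertex `u` to `e(u)` and a new vertex
to the edge it was attached to are cliques, so an independent set meets each fibre at most once
and has at most `|E(G)|` elements; one new vertex per edge attains this when `q ≥ 1`. Thus
`α(G_q(g+1)) = |E(G_q(g))|`. Summing degrees (`(q+1) deg u` for old vertices, `q+1` for new ones)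
gives `|E(G ⊛ K_q)| = (q+1)(q+2)/2 · |E(G)|`, and `|E(K_{q+2})| = (q+1)(q+2)/2`.
-/

open Finset

lemma indepNum_eq_indepNum {V : Type} (G : SimpleGraph V) : indepNum G = G.indepNum := by
  simp only [indepNum, SimpleGraph.indepNum, SimpleGraph.isNIndepSet_iff]
  rfl

namespace SimpleGraph

variable {α ι : Type*} {G : SimpleGraph α}

lemma indepNum_le_natCard_of_fiber_adj [Finite ι] (f : α → ι)
    (hf : ∀ x y, f x = f y → x ≠ y → G.Adj x y) : G.indepNum ≤ Nat.card ι := by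
  obtain ⟨s, hs⟩ := G.exists_isNIndepSet_indepNum
  have hinj : Set.InjOn f s := fun x hx y hy hxy =>
    of_not_not fun hne => hs.isIndepSet hx hy hne (hf x y hxy hne)
  calc G.indepNum = Nat.card s := by rw [← hs.card_eq, Nat.card_eq_finsetCard]
    _ ≤ Nat.card ι := Nat.card_le_card_of_injective _ (hinj.injective)

lemma indepNum_top [Finite α] [Nonempty α] : (⊤ : SimpleGraph α).indepNum = 1 := by
  refine le_antisymm ?_ ?_
  · simpa using indepNum_le_natCard_of_fiber_adj (G := ⊤) (fun _ => ()) fun _ _ _ h => h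
  · obtain ⟨a⟩ := ‹Nonempty α›
    have hs : (⊤ : SimpleGraph α).IsIndepSet (({a} : Finset α) : Set α) := by simp
    simpa using hs.card_le_indepNum

lemma degree_eq_card_adj_inl_add_card_adj_inr {V W : Type*} [Fintype V] [Fintype W]
    (H : SimpleGraph (V ⊕ W)) [DecidableRel H.Adj] (x : V ⊕ W) :
    H.degree x = #{v | H.Adj x (.inl v)} + #{w | H.Adj x (.inr w)} := by
  simp only [← card_neighborFinset_eq_degree, neighborFinset_eq_filter, card_filter,
    Fintype.sum_sum_type]

lemma card_filter_mem_edgeSet {V : Type*} [Fintype V] [DecidableEq V] (G : SimpleGraph V)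
    [DecidableRel G.Adj] (u : V) : #{e : G.edgeSet | u ∈ (e : Sym2 V)} = G.degree u := by
  rw [← card_incidenceSet_eq_degree, ← Fintype.card_subtype]
  exact Fintype.card_congr (Equiv.subtypeSubtypeEquivSubtypeInter (· ∈ G.edgeSet) (u ∈ ·))

end SimpleGraph

section edgeCorona

variable {V : Type} (G : SimpleGraph V) (q : ℕ)

@[simp] lemma edgeCorona_adj_inl_inl (u v : V) :
    (edgeCorona G q).Adj (.inl u) (.inl v) ↔ G.Adj u v := Iff.rfl

@[simp] lemma edgeCorona_adj_inl_inr (u : V) (p : G.edgeSet × Fin q) :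
    (edgeCorona G q).Adj (.inl u) (.inr p) ↔ u ∈ (p.1 : Sym2 V) := Iff.rfl

@[simp] lemma edgeCorona_adj_inr_inl (v : V) (p : G.edgeSet × Fin q) :
    (edgeCorona G q).Adj (.inr p) (.inl v) ↔ v ∈ (p.1 : Sym2 V) := Iff.rfl

@[simp] lemma edgeCorona_adj_inr_inr (p r : G.edgeSet × Fin q) :
    (edgeCorona G q).Adj (.inr p) (.inr r) ↔ p.1 = r.1 ∧ p.2 ≠ r.2 := Iff.rfl

lemma edgeCorona_exists_adj (hG : ∀ v, ∃ w, G.Adj v w) :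
    ∀ x, ∃ y, (edgeCorona G q).Adj x y
  | .inl u => let ⟨w, hw⟩ := hG u; ⟨.inl w, hw⟩
  | .inr ⟨⟨e, _⟩, _⟩ => ⟨.inl e.out.1, e.out_fst_mem⟩

section Degree

variable [Fintype V] [DecidableEq V] [DecidableRel G.Adj] [DecidableRel (edgeCorona G q).Adj]

lemma edgeCorona_degree_inr (p : G.edgeSet × Fin q) :
    (edgeCorona G q).degree (.inr p) = q + 1 := by
  obtain ⟨⟨e, he⟩, i⟩ := p
  have hends : #{v | v ∈ e} = 2 := by
    rw [← e.card_toFinset_of_not_isDiag (G.not_isDiag_of_mem_edgeSet he)]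
    congr 1
    ext
    simp
  have hclique : #{r : G.edgeSet × Fin q | ⟨e, he⟩ = r.1 ∧ i ≠ r.2} = q - 1 := by
    rw [← univ_product_univ, filter_product, filter_eq, filter_ne]
    simp
  simp only [SimpleGraph.degree_eq_card_adj_inl_add_card_adj_inr, edgeCorona_adj_inr_inl,
    edgeCorona_adj_inr_inr, hends, hclique]
  have := i.pos
  omega

lemma edgeCorona_degree_inl (u : V) :
    (edgeCorona G q).degree (.inl u) = (q + 1) * G.degree u := by
  have hbase : #{v | G.Adj u v} = G.degree u := by
    rw [← G.neighborFinset_eq_filter, G.card_neighborFinset_eq_degree]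
  have hcliques : #{r : G.edgeSet × Fin q | u ∈ (r.1 : Sym2 V)} = G.degree u * q := by
    rw [← univ_product_univ, filter_product_left (fun e : G.edgeSet => u ∈ (e : Sym2 V)),
      card_product, G.card_filter_mem_edgeSet, card_univ, Fintype.card_fin]
  simp only [SimpleGraph.degree_eq_card_adj_inl_add_card_adj_inr, edgeCorona_adj_inl_inl,
    edgeCorona_adj_inl_inr, hbase, hcliques]
  ring

lemma two_mul_card_edgeFinset_edgeCorona :
    2 * #(edgeCorona G q).edgeFinset = (q + 1) * (q + 2) * #G.edgeFinset := by
  rw [← SimpleGraph.sum_degrees_eq_twice_card_edges, Fintype.sum_sum_type]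
  simp only [edgeCorona_degree_inl, edgeCorona_degree_inr, ← mul_sum,
    SimpleGraph.sum_degrees_eq_twice_card_edges, sum_const, card_univ, Fintype.card_prod,
    Fintype.card_fin, smul_eq_mul, ← SimpleGraph.edgeFinset_card]
  ring

end Degree

lemma natCard_edgeSet_edgeCorona [Finite V] :
    Nat.card (edgeCorona G q).edgeSet = (q + 1) * (q + 2) / 2 * Nat.card G.edgeSet := by
  classical
  have := Fintype.ofFinite V
  obtain ⟨t, ht⟩ : ∃ t, (q + 1) * (q + 2) = 2 * t :=
    (Nat.even_mul_succ_self (q + 1)).exists_two_nsmul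
  have htwice := two_mul_card_edgeFinset_edgeCorona G q
  rw [Nat.card_eq_fintype_card, Nat.card_eq_fintype_card, ← SimpleGraph.edgeFinset_card,
    ← SimpleGraph.edgeFinset_card, ht, Nat.mul_div_cancel_left t two_pos]
  rw [ht, mul_assoc] at htwice
  exact Nat.eq_of_mul_eq_mul_left two_pos htwice

lemma indepNum_edgeCorona [Finite V] (hq : 0 < q) (hG : ∀ v, ∃ w, G.Adj v w) :
    (edgeCorona G q).indepNum = Nat.card G.edgeSet := by
  classical
  have := Fintype.ofFinite V
  refine le_antisymm ?_ ?_
  · choose w hw using hG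
    let pick (u : V) : G.edgeSet := ⟨s(u, w u), hw u⟩
    have hpick (u : V) : u ∈ (pick u : Sym2 V) := Sym2.mem_mk_left _ _
    refine SimpleGraph.indepNum_le_natCard_of_fiber_adj (Sum.elim pick Prod.fst) ?_
    rintro (u | p) (v | r) h hne <;> simp only [Sum.elim_inl, Sum.elim_inr] at h
    · have huv : (pick v : Sym2 V) = s(u, v) :=
        (Sym2.mem_and_mem_iff fun h => hne (congrArg _ h)).1 ⟨h ▸ hpick u, hpick v⟩
      rw [edgeCorona_adj_inl_inl, ← SimpleGraph.mem_edgeSet, ← huv]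
      exact (pick v).2
    · rw [edgeCorona_adj_inl_inr, ← h]
      exact hpick u
    · rw [edgeCorona_adj_inr_inl, h]
      exact hpick v
    · exact ⟨h, fun h' => hne (congrArg _ (Prod.ext h h'))⟩
  · let s := univ.map ⟨fun e : G.edgeSet => (.inr (e, ⟨0, hq⟩) : V ⊕ (G.edgeSet × Fin q)),
      fun e f h => by simpa using h⟩
    have hs : (edgeCorona G q).IsIndepSet s := by
      rintro _ hx _ hy - hadj
      obtain ⟨e, -, rfl⟩ := mem_map.1 hx
      obtain ⟨f, -, rfl⟩ := mem_map.1 hy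
      exact hadj.2 rfl
    simpa [s, Nat.card_eq_fintype_card] using hs.card_le_indepNum

end edgeCorona

instance GVert.finite (q g : ℕ) : Finite (GVert q g) := by
  induction g with
  | zero => exact inferInstanceAs (Finite (Fin (q + 2)))
  | succ g _ => exact inferInstanceAs (Finite (GVert q g ⊕ ((Gnet q g).edgeSet × Fin q)))

lemma Gnet_exists_adj (q : ℕ) : ∀ g (v : GVert q g), ∃ w, (Gnet q g).Adj v w
  | 0, v => (exists_ne (α := Fin (q + 2)) v).imp fun _ h => h.symm
  | g + 1, v => edgeCorona_exists_adj _ q (Gnet_exists_adj q g) v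

lemma natCard_edgeSet_Gnet (q : ℕ) :
    ∀ g, Nat.card (Gnet q g).edgeSet = ((q + 1) * (q + 2) / 2) ^ (g + 1)
  | 0 => by
    show Nat.card (⊤ : SimpleGraph (Fin (q + 2))).edgeSet = _
    rw [Nat.card_eq_fintype_card, ← SimpleGraph.edgeFinset_card,
      SimpleGraph.card_edgeFinset_top_eq_card_choose_two, Fintype.card_fin, Nat.choose_two_right,
      zero_add, pow_one, mul_comm]
    rfl
  | g + 1 => by
    rw [pow_succ, ← natCard_edgeSet_Gnet q g, mul_comm]
    exact natCard_edgeSet_edgeCorona (Gnet q g) q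

/-- For all `g ≥ 0`, `q ≥ 1`, the independence number of `G_q(g)` equals
`((q+1)(q+2)/2)^g`. -/
theorem indepNum_Gnet (q g : ℕ) (hq : 1 ≤ q) :
    indepNum (Gnet q g) = ((q + 1) * (q + 2) / 2) ^ g := by
  rw [indepNum_eq_indepNum]
  cases g with
  | zero => exact SimpleGraph.indepNum_top (α := Fin (q + 2))
  | succ g =>
    rw [← natCard_edgeSet_Gnet q g]
    exact indepNum_edgeCorona (Gnet q g) q hq (Gnet_exists_adj q g)
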